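/- In E[[z]], the ratio ₁φ₁(0;cq;q,qz) / ₁φ₁(0;c;q,z) admits the following two continued fraction expansions: (i) it equals 1/(1 − b_0 z − a_1 z/(1 − b_1 z − a_2 z/(1 − b_2 z − ⋯))) with a_i := cq^{2i−1}/((1 − cq^{i−1})(1 − cq^i)) and b_i := q^i/(1 − cq^i); and (ii) it equals 1/(1 − λ_1 z/(1 − λ_2 z/(1 − λ_3 z/(1 − ⋯)))) with λ_{2i} := cq^{3i−1}/((1 − cq^{2i−1})(1 − cq^{2i})) and λ_{2i+1} := q^i/((1 − cq^{2i})(1 − cq^{2i+1})). -/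

import Mathlib

noncomputable section

/-- `E`, the fraction field of `ℚ[q,c]`. -/
abbrev E : Type := FractionRing (MvPolynomial (Fin 2) ℚ)

def qv : E := algebraMap (MvPolynomial (Fin 2) ℚ) E (MvPolynomial.X 0)
def cv : E := algebraMap (MvPolynomial (Fin 2) ℚ) E (MvPolynomial.X 1)

/-- The q-Pochhammer symbol `(u;q)_n`. -/
def qPoch (u : E) (n : ℕ) : E := ∏ j ∈ Finset.range n, (1 - u * qv ^ j)

/-- `₁φ₁(0; C; q, α z)` as an element of `E[[z]]`: its `n`-th coefficient is
`(−1)^n q^{n(n−1)/2} α^n / ((q;q)_n (C;q)_n)`. -/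
def phiSeries (C α : E) : PowerSeries E :=
  PowerSeries.mk fun n =>
    (-1) ^ n * qv ^ (n * (n - 1) / 2) * α ^ n / (qPoch qv n * qPoch C n)

/-- `b_i = q^i/(1 − cq^i)`. -/
def bE (i : ℕ) : E := qv ^ i / (1 - cv * qv ^ i)

/-- `a_i = cq^{2i−1}/((1 − cq^{i−1})(1 − cq^i))`. -/
def aE (i : ℕ) : E :=
  cv * qv ^ (2 * (i : ℤ) - 1) / ((1 - cv * qv ^ ((i : ℤ) - 1)) * (1 - cv * qv ^ i))

/-- `λ_{2i} = cq^{3i−1}/((1 − cq^{2i−1})(1 − cq^{2i}))` and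
`λ_{2i+1} = q^i/((1 − cq^{2i})(1 − cq^{2i+1}))`. -/
def lamE (n : ℕ) : E :=
  (if n % 2 = 0 then cv * qv ^ (3 * ((n : ℤ) / 2) - 1) else (qv : E) ^ (n / 2)) /
    ((1 - cv * qv ^ ((n : ℤ) - 1)) * (1 - cv * qv ^ n))

/-- The depth-`N` convergent of the `J`-type continued fraction
`1/(1 − b_0 z − a_1 z/(1 − b_1 z − ⋯ − a_N z/(1 − b_N z)))`: `convJ b a N k` is the tail
starting with `b_{N-k}`, so the convergent is `convJ b a N N`. -/
def convJ (b a : ℕ → E) (N : ℕ) : ℕ → PowerSeries E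
  | 0 => (1 - PowerSeries.C (b N) * PowerSeries.X)⁻¹
  | k + 1 =>
      (1 - PowerSeries.C (b (N - k - 1)) * PowerSeries.X -
          PowerSeries.C (a (N - k)) * PowerSeries.X * convJ b a N k)⁻¹

/-- The depth-`N` convergent of the Stieltjes-type continued fraction
`1/(1 − λ_1 z/(1 − λ_2 z/(⋯ − λ_N z/1)))`. -/
def convS (lam : ℕ → E) (N : ℕ) : ℕ → PowerSeries E
  | 0 => 1
  | k + 1 => (1 - PowerSeries.C (lam (N - k)) * PowerSeries.X * convS lam N k)⁻¹

/-!
Write `φ(u, α)` for `₁φ₁(0; u; q, αz)`. Comparing coefficients gives three contiguous relations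
of the shape `φ = φ' - κ z φ''`, where `φ'` and `φ''` have `u` and `α` shifted by powers of `q`.
Composing them, `G_k = φ(cq^k, q^k)` satisfies `G_k = (1 - b_k z) G_{k+1} - a_{k+1} z G_{k+2}` and
`H_j = φ(cq^j, q^⌈j/2⌉)` satisfies `H_j = H_{j+1} - λ_{j+1} z H_{j+2}`. Dividing by the middle term,
the ratios `r_k = G_{k+1}/G_k` satisfy `r_k = 1/(1 - b_k z - a_{k+1} z r_{k+1})`, so they are the
tails of the continued fraction; each level contributes a factor `z`, hence cutting the fraction
at depth `N` changes it only modulo `z^{N+1}`. The S-fraction is the J-fraction with all `b_k = 0`.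
-/

open PowerSeries

lemma algebraMap_ne_zero_of_eval_zero_ne_zero {p : MvPolynomial (Fin 2) ℚ}
    (hp : MvPolynomial.eval 0 p ≠ 0) : algebraMap (MvPolynomial (Fin 2) ℚ) E p ≠ 0 :=
  (map_ne_zero_iff _ (IsFractionRing.injective _ _)).2 fun h => hp (by simp [h])

lemma one_sub_cv_mul_qv_pow_ne_zero (j : ℕ) : 1 - cv * qv ^ j ≠ 0 := by
  convert algebraMap_ne_zero_of_eval_zero_ne_zero
    (p := 1 - MvPolynomial.X 1 * MvPolynomial.X 0 ^ j) (by simp) using 1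
  simp [cv, qv]

lemma one_sub_cv_mul_qv_pow_mul_ne_zero (k j : ℕ) : 1 - cv * qv ^ k * qv ^ j ≠ 0 := by
  rw [mul_assoc, ← pow_add]
  exact one_sub_cv_mul_qv_pow_ne_zero (k + j)

lemma one_sub_qv_pow_succ_ne_zero (j : ℕ) : 1 - qv ^ (j + 1) ≠ 0 := by
  convert algebraMap_ne_zero_of_eval_zero_ne_zero
    (p := 1 - MvPolynomial.X 0 ^ (j + 1)) (by simp) using 1
  simp [qv]

lemma constantCoeff_phiSeries (u α : E) : constantCoeff (phiSeries u α) = 1 := by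
  simp [← coeff_zero_eq_constantCoeff_apply, phiSeries, qPoch]

lemma coeff_succ_phiSeries (u α : E) (n : ℕ) :
    coeff (n + 1) (phiSeries u α) =
      -(qv ^ n * α) / ((1 - qv ^ (n + 1)) * (1 - u * qv ^ n)) * coeff n (phiSeries u α) := by
  have htri : (n + 1) * (n + 1 - 1) / 2 = n * (n - 1) / 2 + n := by
    rw [Nat.add_sub_cancel, ← Nat.add_mul_div_right _ _ two_pos]
    congr 1
    cases n with
    | zero => rfl
    | succ n => simp; ring
  simp only [phiSeries, coeff_mk, qPoch, Finset.prod_range_succ, htri]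
  simp only [div_eq_mul_inv, mul_inv]
  ring

lemma coeff_phiSeries_qv_mul (u α : E) (n : ℕ) :
    coeff n (phiSeries u (qv * α)) = qv ^ n * coeff n (phiSeries u α) := by
  simp only [phiSeries, coeff_mk]
  ring

lemma coeff_phiSeries_mul_qv {u : E} (hu : 1 - u ≠ 0) (α : E) (n : ℕ) :
    coeff n (phiSeries (u * qv) α) = (1 - u) / (1 - u * qv ^ n) * coeff n (phiSeries u α) := by
  have hshift : qPoch u n * (1 - u * qv ^ n) = (1 - u) * qPoch (u * qv) n := by
    rw [qPoch, ← Finset.prod_range_succ, Finset.prod_range_succ', qPoch, mul_comm]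
    simp only [pow_succ', pow_zero, mul_one, mul_assoc]
  simp only [phiSeries, coeff_mk]
  rw [div_mul_div_comm, show (1 - u * qv ^ n) * (qPoch qv n * qPoch u n)
      = (1 - u) * (qPoch qv n * qPoch (u * qv) n) by linear_combination qPoch qv n * hshift,
    mul_div_mul_left _ _ hu]

lemma PowerSeries.eq_sub_C_mul_X_mul_of_coeff {R : Type*} [CommRing R] {f g h : R⟦X⟧} {c : R}
    (hzero : coeff 0 f = coeff 0 g)
    (hsucc : ∀ m, coeff (m + 1) f = coeff (m + 1) g - c * coeff m h) :
    f = g - C c * X * h := by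
  ext (_ | m)
  · simp [hzero]
  · simp [mul_assoc, hsucc]

section Contiguous

variable {u : E} (hu : ∀ j, 1 - u * qv ^ j ≠ 0) (α : E)
include hu

lemma phiSeries_contiguous_arg :
    phiSeries u α = phiSeries u (qv * α) - C (α / (1 - u)) * X * phiSeries (u * qv) (qv * α) := by
  have hu₀ : 1 - u ≠ 0 := by simpa using hu 0
  refine eq_sub_C_mul_X_mul_of_coeff (by simp [constantCoeff_phiSeries]) fun m => ?_
  have := hu m
  have := one_sub_qv_pow_succ_ne_zero m
  rw [coeff_phiSeries_qv_mul, coeff_phiSeries_qv_mul, coeff_phiSeries_mul_qv hu₀,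
    coeff_succ_phiSeries]
  field_simp
  ring

lemma phiSeries_contiguous_param :
    phiSeries u α = phiSeries (u * qv) α
      - C (α * u / ((1 - u) * (1 - u * qv))) * X * phiSeries (u * qv * qv) (qv * α) := by
  have hu₀ : 1 - u ≠ 0 := by simpa using hu 0
  have hu₁ : 1 - u * qv ≠ 0 := by simpa using hu 1
  refine eq_sub_C_mul_X_mul_of_coeff (by simp [constantCoeff_phiSeries]) fun m => ?_
  -- the denominators, in the form to which `field_simp` normalises them
  have h₁ : 1 - qv ^ m * u ≠ 0 := by rw [mul_comm]; exact hu m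
  have h₂ : 1 - qv ^ (m + 1) * u ≠ 0 := by rw [mul_comm]; exact hu (m + 1)
  have h₂' : 1 - qv ^ m * u * qv ≠ 0 := by rw [mul_right_comm, ← pow_succ]; exact h₂
  have h₃ := one_sub_qv_pow_succ_ne_zero m
  rw [coeff_phiSeries_mul_qv hu₀ α (m + 1), coeff_phiSeries_qv_mul, coeff_phiSeries_mul_qv hu₁,
    coeff_phiSeries_mul_qv hu₀, coeff_succ_phiSeries]
  field_simp
  ring

lemma phiSeries_contiguous_param_arg :
    phiSeries u α = phiSeries (u * qv) (qv * α)
      - C (α / ((1 - u) * (1 - u * qv))) * X * phiSeries (u * qv * qv) (qv * α) := by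
  have hu₀ : 1 - u ≠ 0 := by simpa using hu 0
  have hu₁ : 1 - u * qv ≠ 0 := by simpa using hu 1
  refine eq_sub_C_mul_X_mul_of_coeff (by simp [constantCoeff_phiSeries]) fun m => ?_
  have h₁ : 1 - qv ^ m * u ≠ 0 := by rw [mul_comm]; exact hu m
  have h₂ : 1 - qv ^ (m + 1) * u ≠ 0 := by rw [mul_comm]; exact hu (m + 1)
  have h₂' : 1 - qv ^ m * u * qv ≠ 0 := by rw [mul_right_comm, ← pow_succ]; exact h₂
  have h₃ := one_sub_qv_pow_succ_ne_zero m
  rw [coeff_phiSeries_qv_mul, coeff_phiSeries_mul_qv hu₀ _ (m + 1), coeff_phiSeries_qv_mul,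
    coeff_phiSeries_mul_qv hu₁, coeff_phiSeries_mul_qv hu₀, coeff_succ_phiSeries]
  field_simp
  ring

end Contiguous

lemma PowerSeries.X_pow_dvd_inv_sub_inv {K : Type*} [Field K] {f g : K⟦X⟧}
    (hf : constantCoeff f ≠ 0) (hg : constantCoeff g ≠ 0) {n : ℕ} (h : X ^ n ∣ f - g) :
    X ^ n ∣ f⁻¹ - g⁻¹ := by
  have hfg : f⁻¹ - g⁻¹ = f⁻¹ * g⁻¹ * (g - f) := by
    linear_combination g⁻¹ * PowerSeries.mul_inv_cancel f hf
      - f⁻¹ * PowerSeries.mul_inv_cancel g hg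
  rw [hfg, ← neg_sub]
  exact (dvd_neg.2 h).mul_left _

section JFraction

variable {b a : ℕ → E} {f : ℕ → E⟦X⟧} (hf : ∀ k, constantCoeff (f k) ≠ 0)
  (hrec : ∀ k, f k = (1 - C (b k) * X) * f (k + 1) - C (a (k + 1)) * X * f (k + 2))
include hf hrec

lemma ratio_eq_inv_of_recurrence (k : ℕ) :
    f (k + 1) * (f k)⁻¹
      = (1 - C (b k) * X - C (a (k + 1)) * X * (f (k + 2) * (f (k + 1))⁻¹))⁻¹ := by
  rw [eq_inv_iff_mul_eq_one (by simp)]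
  linear_combination (f k)⁻¹ * (hrec k).symm + PowerSeries.mul_inv_cancel _ (hf k)
    - C (a (k + 1)) * X * f (k + 2) * (f k)⁻¹ * PowerSeries.mul_inv_cancel _ (hf (k + 1))

lemma X_pow_dvd_convJ_sub_ratio (N : ℕ) :
    ∀ k n, k + n = N → X ^ (k + 1) ∣ convJ b a N k - f (n + 1) * (f n)⁻¹ := by
  intro k
  induction k with
  | zero =>
    rintro n rfl
    simp only [convJ, zero_add]
    rw [ratio_eq_inv_of_recurrence hf hrec]
    refine X_pow_dvd_inv_sub_inv (by simp) (by simp)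
      ⟨C (a (n + 1)) * (f (n + 2) * (f (n + 1))⁻¹), by ring⟩
  | succ k ih =>
    rintro n rfl
    obtain ⟨t, ht⟩ := ih (n + 1) (by ring)
    rw [convJ, ratio_eq_inv_of_recurrence hf hrec, show k + 1 + n - k - 1 = n by omega,
      show k + 1 + n - k = n + 1 by omega]
    refine X_pow_dvd_inv_sub_inv (by simp) (by simp) ⟨-(C (a (n + 1)) * t), ?_⟩
    linear_combination (-(C (a (n + 1)) * X)) * ht

theorem coeff_ratio_eq_coeff_convJ {N i : ℕ} (hi : i ≤ N) :
    coeff i (f 1 * (f 0)⁻¹) = coeff i (convJ b a N N) := by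
  have hdvd := X_pow_dvd_convJ_sub_ratio hf hrec N N 0 rfl
  rw [X_pow_dvd_iff] at hdvd
  exact (sub_eq_zero.1 (hdvd i (Nat.lt_succ_of_le hi))).symm

end JFraction

lemma convS_eq_convJ_zero (lam : ℕ → E) (N k : ℕ) : convS lam N k = convJ 0 lam N k := by
  induction k with
  | zero => simp [convS, convJ]
  | succ k ih => simp [convS, convJ, ih]

theorem coeff_ratio_eq_coeff_convS {lam : ℕ → E} {f : ℕ → E⟦X⟧}
    (hf : ∀ k, constantCoeff (f k) ≠ 0)
    (hrec : ∀ k, f k = f (k + 1) - C (lam (k + 1)) * X * f (k + 2)) {N i : ℕ} (hi : i ≤ N) :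
    coeff i (f 1 * (f 0)⁻¹) = coeff i (convS lam N N) := by
  rw [convS_eq_convJ_zero]
  exact coeff_ratio_eq_coeff_convJ hf (by simpa using hrec) hi

lemma aE_succ (k : ℕ) :
    aE (k + 1) = cv * qv ^ (2 * k + 1) / ((1 - cv * qv ^ k) * (1 - cv * qv ^ (k + 1))) := by
  rw [aE, show 2 * ((k + 1 : ℕ) : ℤ) - 1 = (2 * k + 1 : ℕ) by push_cast; ring,
    show ((k + 1 : ℕ) : ℤ) - 1 = k by push_cast; ring, zpow_natCast, zpow_natCast]

lemma lamE_odd (k : ℕ) :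
    lamE (2 * k + 1) = qv ^ k / ((1 - cv * qv ^ (2 * k)) * (1 - cv * qv ^ (2 * k + 1))) := by
  rw [lamE, if_neg (by omega), show ((2 * k + 1 : ℕ) : ℤ) - 1 = (2 * k : ℕ) by push_cast; ring,
    zpow_natCast, show (2 * k + 1) / 2 = k by omega]

lemma lamE_even (k : ℕ) :
    lamE (2 * k + 2) =
      cv * qv ^ (3 * k + 2) / ((1 - cv * qv ^ (2 * k + 1)) * (1 - cv * qv ^ (2 * k + 2))) := by
  rw [lamE, if_pos (by omega), show 3 * (((2 * k + 2 : ℕ) : ℤ) / 2) - 1 = (3 * k + 2 : ℕ) by omega,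
    show ((2 * k + 2 : ℕ) : ℤ) - 1 = (2 * k + 1 : ℕ) by push_cast; ring, zpow_natCast, zpow_natCast]

lemma phiSeries_jFraction_recurrence (k : ℕ) :
    phiSeries (cv * qv ^ k) (qv ^ k)
      = (1 - C (bE k) * X) * phiSeries (cv * qv ^ (k + 1)) (qv ^ (k + 1))
        - C (aE (k + 1)) * X * phiSeries (cv * qv ^ (k + 2)) (qv ^ (k + 2)) := by
  have hu := one_sub_cv_mul_qv_pow_mul_ne_zero k
  have h₁ := phiSeries_contiguous_arg hu (qv ^ k)
  have h₂ := phiSeries_contiguous_param hu (qv * qv ^ k)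
  simp only [mul_assoc, ← pow_succ, ← pow_succ'] at h₁ h₂
  have ha : qv ^ (k + 1) * (cv * qv ^ k) / ((1 - cv * qv ^ k) * (1 - cv * qv ^ (k + 1)))
      = aE (k + 1) := by
    rw [aE_succ]
    ring
  rw [h₁, h₂, ha, bE]
  ring

lemma phiSeries_sFraction_recurrence (j : ℕ) :
    phiSeries (cv * qv ^ j) (qv ^ ((j + 1) / 2))
      = phiSeries (cv * qv ^ (j + 1)) (qv ^ ((j + 1 + 1) / 2))
        - C (lamE (j + 1)) * X * phiSeries (cv * qv ^ (j + 2)) (qv ^ ((j + 2 + 1) / 2)) := by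
  obtain ⟨k, rfl | rfl⟩ := Nat.even_or_odd' j
  · have h := phiSeries_contiguous_param_arg (one_sub_cv_mul_qv_pow_mul_ne_zero (2 * k)) (qv ^ k)
    simp only [mul_assoc, ← pow_succ, ← pow_succ'] at h
    rw [show (2 * k + 1) / 2 = k by omega, show (2 * k + 1 + 1) / 2 = k + 1 by omega,
      show (2 * k + 2 + 1) / 2 = k + 1 by omega, lamE_odd]
    linear_combination (norm := ring_nf) h
  · have h :=
      phiSeries_contiguous_param (one_sub_cv_mul_qv_pow_mul_ne_zero (2 * k + 1)) (qv ^ (k + 1))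
    simp only [mul_assoc, ← pow_succ, ← pow_succ'] at h
    rw [show (2 * k + 1 + 1) / 2 = k + 1 by omega, show (2 * k + 1 + 1 + 1) / 2 = k + 1 by omega,
      show (2 * k + 1 + 2 + 1) / 2 = k + 2 by omega, show 2 * k + 1 + 1 = 2 * k + 2 by omega,
      lamE_even]
    linear_combination (norm := ring_nf) h

/-- Proposition 6.4: the ratio `₁φ₁(0;cq;q,qz)/₁φ₁(0;c;q,z)` admits the two continued
fraction expansions, with data `(b_i, a_i)` and with data `λ_i`, each identity meaning
that the depth-`N` convergent agrees with the ratio modulo `z^N` for every `N ≥ 1`. -/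
theorem two_continued_fractions_1phi1 :
    (∀ N : ℕ, 1 ≤ N → ∀ i < N,
      PowerSeries.coeff i (phiSeries (cv * qv) qv * (phiSeries cv 1)⁻¹)
        = PowerSeries.coeff i (convJ bE aE N N)) ∧
    (∀ N : ℕ, 1 ≤ N → ∀ i < N,
      PowerSeries.coeff i (phiSeries (cv * qv) qv * (phiSeries cv 1)⁻¹)
        = PowerSeries.coeff i (convS lamE N N)) := by
  have hunit (u α : E) : constantCoeff (phiSeries u α) ≠ 0 := by simp [constantCoeff_phiSeries]
  refine ⟨fun N _ i hi => ?_, fun N _ i hi => ?_⟩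
  · simpa only [pow_zero, pow_one, mul_one] using
      coeff_ratio_eq_coeff_convJ (f := fun k => phiSeries (cv * qv ^ k) (qv ^ k))
        (fun _ => hunit _ _) phiSeries_jFraction_recurrence hi.le
  · simpa only [Nat.reduceAdd, Nat.reduceDiv, pow_zero, pow_one, mul_one] using
      coeff_ratio_eq_coeff_convS (f := fun j => phiSeries (cv * qv ^ j) (qv ^ ((j + 1) / 2)))
        (fun _ => hunit _ _) phiSeries_sFraction_recurrence hi.le

end
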